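/- arXiv:1206.1709 — 2 statements merged into one kernel-verified Lean document; each statement's English description precedes it below -/
import Mathlib

section
/- Let f : ℝ^d → ℝ be a C² function with compact support contained in ℝ^d ∖ {0}, let n ∈ ℕ and let 0 < ε ≤ 1. Then there is a constant c = c(f, n, ε) such that for all x_1, …, x_n, q ∈ ℝ^d: |f(x_1 + ⋯ + x_n + q) − Σ_{j=1}^n f(x_j)| ≤ c · ( |q|^ε + Σ_{i ≠ j} |x_i|^ε |x_j|^ε ). -/
/-!
A `C²` function with compact support is Lipschitz (constant `K`) and bounded (by `M`), and `f`
vanishes on a ball of radius `2r` around `0`. Hence `f (u + v) - f u - f v` vanishes when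
`‖u‖, ‖v‖ < r`, is at most `K ‖u‖` when only `‖u‖ < r`, and at most `3M` otherwise: in every case
it is `O(‖u‖^ε ‖v‖^ε)`. Adding the `x j` one at a time and using `(∑ aᵢ)^ε ≤ ∑ aᵢ^ε` gives the bound
for `n` summands, and a bounded Lipschitz function is `ε`-Hölder, which absorbs `q`.
-/

open Filter Topology Finset

lemma Real.rpow_sum_le_sum_rpow {ι : Type*} (s : Finset ι) {a : ι → ℝ} (ha : ∀ i ∈ s, 0 ≤ a i)
    {p : ℝ} (hp : 0 < p) (hp1 : p ≤ 1) : (∑ i ∈ s, a i) ^ p ≤ ∑ i ∈ s, a i ^ p := by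
  induction s using Finset.cons_induction with
  | empty => simp [Real.zero_rpow hp.ne']
  | cons i s hi ih =>
    have hs : ∀ j ∈ s, 0 ≤ a j := fun j hj => ha j (mem_cons_of_mem hj)
    rw [sum_cons, sum_cons]
    calc (a i + ∑ j ∈ s, a j) ^ p ≤ a i ^ p + (∑ j ∈ s, a j) ^ p :=
          Real.rpow_add_le_add_rpow (ha i (mem_cons_self i s)) (sum_nonneg hs) hp.le hp1
      _ ≤ a i ^ p + ∑ j ∈ s, a j ^ p := by gcongr; exact ih hs

lemma Real.le_rpow_mul_rpow {a b ε : ℝ} (ha : 0 ≤ a) (ha1 : a ≤ 1) (hb : 1 ≤ b) (hε0 : 0 ≤ ε)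
    (hε1 : ε ≤ 1) : a ≤ a ^ ε * b ^ ε :=
  calc a ≤ a ^ ε := Real.self_le_rpow_of_le_one ha ha1 hε1
    _ ≤ a ^ ε * b ^ ε := le_mul_of_one_le_right (Real.rpow_nonneg ha ε) (Real.one_le_rpow hb hε0)

lemma Finset.sum_sum_ite_ne_mul {ι R : Type*} [CommRing R] [DecidableEq ι] (s : Finset ι)
    (w : ι → R) :
    ∑ i ∈ s, ∑ j ∈ s, (if i ≠ j then w i * w j else 0) = (∑ i ∈ s, w i) ^ 2 - ∑ i ∈ s, w i ^ 2 := by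
  rw [sq, sum_mul_sum, eq_sub_iff_add_eq, ← sum_add_distrib]
  refine sum_congr rfl fun i hi => ?_
  rw [← sum_filter, filter_ne, sq, add_comm]
  exact add_sum_erase s (fun j => w i * w j) hi

section

variable {E F : Type*} [SeminormedAddCommGroup E] [SeminormedAddCommGroup F] {f : E → F}
  {K : NNReal} {M ε : ℝ}

lemma norm_map_add_sub_map_le_mul_rpow (hK : LipschitzWith K f) (hM : ∀ u, ‖f u‖ ≤ M)
    (hε0 : 0 ≤ ε) (hε1 : ε ≤ 1) (u q : E) : ‖f (u + q) - f u‖ ≤ (K + 2 * M) * ‖q‖ ^ ε := by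
  have hM0 : 0 ≤ M := (norm_nonneg _).trans (hM 0)
  rcases le_total ‖q‖ 1 with hq | hq
  · calc ‖f (u + q) - f u‖ ≤ K * ‖q‖ := by
          simpa [dist_eq_norm] using hK.dist_le_mul (u + q) u
      _ ≤ K * ‖q‖ ^ ε := by gcongr; exact Real.self_le_rpow_of_le_one (norm_nonneg q) hq hε1
      _ ≤ (K + 2 * M) * ‖q‖ ^ ε := by gcongr; linarith
  · calc ‖f (u + q) - f u‖ ≤ ‖f (u + q)‖ + ‖f u‖ := norm_sub_le _ _
      _ ≤ (K + 2 * M) * 1 := by linarith [hM (u + q), hM u, K.coe_nonneg]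
      _ ≤ (K + 2 * M) * ‖q‖ ^ ε := by gcongr; exact Real.one_le_rpow hq hε0

lemma norm_map_add_sub_map_sub_map_le (hK : LipschitzWith K f) (hM : ∀ u, ‖f u‖ ≤ M) {r : ℝ}
    (hr : 0 < r) (hvan : ∀ u, ‖u‖ < 2 * r → f u = 0) (hε0 : 0 ≤ ε) (hε1 : ε ≤ 1) (u v : E) :
    ‖f (u + v) - f u - f v‖ ≤ (K * r + 3 * M) * ((‖u‖ / r) ^ ε * (‖v‖ / r) ^ ε) := by
  have hM0 : 0 ≤ M := (norm_nonneg _).trans (hM 0)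
  have hKr : 0 ≤ K * r := by positivity
  have mixed : ∀ u v : E, ‖u‖ < r → r ≤ ‖v‖ →
      ‖f (u + v) - f u - f v‖ ≤ (K * r + 3 * M) * ((‖u‖ / r) ^ ε * (‖v‖ / r) ^ ε) := by
    intro u v hu hv
    rw [hvan u (by linarith), sub_zero]
    calc ‖f (u + v) - f v‖ ≤ K * ‖u‖ := by simpa [dist_eq_norm] using hK.dist_le_mul (u + v) v
      _ = K * r * (‖u‖ / r) := by field_simp
      _ ≤ K * r * ((‖u‖ / r) ^ ε * (‖v‖ / r) ^ ε) := by
          gcongr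
          exact Real.le_rpow_mul_rpow (by positivity) ((div_le_one hr).2 hu.le)
            ((one_le_div hr).2 hv) hε0 hε1
      _ ≤ (K * r + 3 * M) * ((‖u‖ / r) ^ ε * (‖v‖ / r) ^ ε) := by gcongr; linarith
  rcases lt_or_ge ‖u‖ r with hu | hu <;> rcases lt_or_ge ‖v‖ r with hv | hv
  · have huv : ‖u + v‖ < 2 * r := by linarith [norm_add_le u v]
    rw [hvan u (by linarith), hvan v (by linarith), hvan _ huv]
    simp only [sub_self, norm_zero]
    positivity
  · exact mixed u v hu hv
  · rw [add_comm u v, sub_right_comm, mul_comm ((‖u‖ / r) ^ ε)]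
    exact mixed v u hv hu
  · calc ‖f (u + v) - f u - f v‖ ≤ ‖f (u + v)‖ + ‖f u‖ + ‖f v‖ :=
          (norm_sub_le _ _).trans (by gcongr; exact norm_sub_le _ _)
      _ ≤ 3 * M * 1 := by linarith [hM (u + v), hM u, hM v]
      _ ≤ 3 * M * ((‖u‖ / r) ^ ε * (‖v‖ / r) ^ ε) := by
          gcongr
          exact one_le_mul_of_one_le_of_one_le (Real.one_le_rpow ((one_le_div hr).2 hu) hε0)
            (Real.one_le_rpow ((one_le_div hr).2 hv) hε0)
      _ ≤ (K * r + 3 * M) * ((‖u‖ / r) ^ ε * (‖v‖ / r) ^ ε) := by gcongr; linarith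

lemma exists_norm_map_add_sub_map_sub_map_le (hK : LipschitzWith K f) (hM : ∀ u, ‖f u‖ ≤ M)
    (hf0 : f =ᶠ[𝓝 0] 0) (hε0 : 0 ≤ ε) (hε1 : ε ≤ 1) :
    ∃ C, 0 ≤ C ∧ ∀ u v, ‖f (u + v) - f u - f v‖ ≤ C * (‖u‖ ^ ε * ‖v‖ ^ ε) := by
  obtain ⟨δ, hδ, hball⟩ := Metric.eventually_nhds_iff.1 hf0
  have hr : 0 < δ / 2 := by positivity
  have hM0 : 0 ≤ M := (norm_nonneg _).trans (hM 0)
  refine ⟨(K * (δ / 2) + 3 * M) / (δ / 2) ^ ε / (δ / 2) ^ ε, by positivity, fun u v => ?_⟩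
  convert norm_map_add_sub_map_sub_map_le hK hM hr
    (fun w hw => hball (by simpa using hw.trans_eq (by ring))) hε0 hε1 u v using 1
  rw [Real.div_rpow (norm_nonneg u) hr.le, Real.div_rpow (norm_nonneg v) hr.le]
  ring

lemma norm_map_sum_sub_sum_map_le {ι : Type*} [DecidableEq ι] {C : ℝ} (hC : 0 ≤ C)
    (hε0 : 0 < ε) (hε1 : ε ≤ 1) (hf : ∀ u v, ‖f (u + v) - f u - f v‖ ≤ C * (‖u‖ ^ ε * ‖v‖ ^ ε))
    (s : Finset ι) (x : ι → E) :
    ‖f (∑ i ∈ s, x i) - ∑ i ∈ s, f (x i)‖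
      ≤ C * ∑ i ∈ s, ∑ j ∈ s, if i ≠ j then ‖x i‖ ^ ε * ‖x j‖ ^ ε else 0 := by
  rw [sum_sum_ite_ne_mul]
  induction s using Finset.induction_on with
  | empty => simpa [Real.zero_rpow hε0.ne'] using hf 0 0
  | insert a s ha ih =>
    set S := ∑ i ∈ s, x i
    set W := ∑ i ∈ s, ‖x i‖ ^ ε
    have hS : ‖S‖ ^ ε ≤ W :=
      (Real.rpow_le_rpow (norm_nonneg _) (norm_sum_le _ _) hε0.le).trans
        (Real.rpow_sum_le_sum_rpow s (fun i _ => norm_nonneg _) hε0 hε1)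
    have hcross : 0 ≤ C * (‖x a‖ ^ ε * W) := by positivity
    rw [sum_insert ha, sum_insert ha, sum_insert ha, sum_insert ha]
    calc ‖f (x a + S) - (f (x a) + ∑ i ∈ s, f (x i))‖
        = ‖(f (x a + S) - f (x a) - f S) + (f S - ∑ i ∈ s, f (x i))‖ := by congr 1; abel
      _ ≤ C * (‖x a‖ ^ ε * ‖S‖ ^ ε) + C * (W ^ 2 - ∑ i ∈ s, (‖x i‖ ^ ε) ^ 2) :=
          norm_add_le_of_le (hf _ _) ih
      _ ≤ C * (‖x a‖ ^ ε * W) + C * (W ^ 2 - ∑ i ∈ s, (‖x i‖ ^ ε) ^ 2) := by gcongr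
      _ ≤ C * ((‖x a‖ ^ ε + W) ^ 2 - ((‖x a‖ ^ ε) ^ 2 + ∑ i ∈ s, (‖x i‖ ^ ε) ^ 2)) := by
          linarith

end

theorem stmt5 (d : ℕ) (f : EuclideanSpace ℝ (Fin d) → ℝ)
    (hf : ContDiff ℝ 2 f) (hsupp : HasCompactSupport f)
    (h0 : (0 : EuclideanSpace ℝ (Fin d)) ∉ tsupport f)
    (n : ℕ) (ε : ℝ) (hε1 : 0 < ε) (hε2 : ε ≤ 1) :
    ∃ c : ℝ, ∀ (x : Fin n → EuclideanSpace ℝ (Fin d)) (q : EuclideanSpace ℝ (Fin d)),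
      |f (∑ j, x j + q) - ∑ j, f (x j)|
        ≤ c * (‖q‖ ^ ε + ∑ i, ∑ j, if i ≠ j then ‖x i‖ ^ ε * ‖x j‖ ^ ε else 0) := by
  obtain ⟨K, hK⟩ := hf.lipschitzWith_of_hasCompactSupport hsupp two_ne_zero
  obtain ⟨M, hM⟩ := hsupp.exists_bound_of_continuous hf.continuous
  have hM0 : 0 ≤ M := (norm_nonneg _).trans (hM 0)
  obtain ⟨C, hC0, hC⟩ := exists_norm_map_add_sub_map_sub_map_le hK hM
    (notMem_tsupport_iff_eventuallyEq.1 h0) hε1.le hε2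
  refine ⟨K + 2 * M + C, fun x q => ?_⟩
  set D := ∑ i, ∑ j, if i ≠ j then ‖x i‖ ^ ε * ‖x j‖ ^ ε else 0
  have hD : 0 ≤ D := sum_nonneg fun i _ => sum_nonneg fun j _ => by positivity
  have hq : 0 ≤ ‖q‖ ^ ε := by positivity
  calc |f (∑ j, x j + q) - ∑ j, f (x j)| = ‖f (∑ j, x j + q) - ∑ j, f (x j)‖ :=
        (Real.norm_eq_abs _).symm
    _ ≤ ‖f (∑ j, x j + q) - f (∑ j, x j)‖ + ‖f (∑ j, x j) - ∑ j, f (x j)‖ :=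
        norm_sub_le_norm_sub_add_norm_sub _ _ _
    _ ≤ (K + 2 * M) * ‖q‖ ^ ε + C * D :=
        add_le_add (norm_map_add_sub_map_le_mul_rpow hK hM hε1.le hε2 _ q)
          (norm_map_sum_sub_sum_map_le hC0 hε1 hε2 hC univ x)
    _ ≤ (K + 2 * M + C) * (‖q‖ ^ ε + D) := by
        nlinarith [mul_nonneg (add_nonneg K.coe_nonneg (mul_nonneg zero_le_two hM0)) hD,
          mul_nonneg hC0 hq]
end

section
/- Let R be an ℝ^d-valued random variable and s > 0. If E[|x·R|^s] = ∞ for some x ∈ ℝ^d with |x| = 1, then there exists ε > 0 such that E[|y·R|^s] = ∞ for all y in the unit sphere with |y − x| < ε. -/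
open MeasureTheory
open scoped ENNReal

/-
The vectors `y` for which `⟪y, R⟫` has a finite `s`-th absolute moment form a linear subspace,
since `Lᵖ` is closed under sums and scalar multiples for every `p`, including `p < 1`.
In finite dimension every subspace is closed, so its complement, the set of directions
with infinite moment, is open.
-/

section

variable {Ω E : Type*} [MeasurableSpace Ω] [NormedAddCommGroup E] [InnerProductSpace ℝ E]

theorem memLp_ofReal_iff_lintegral_abs_rpow_ne_top {μ : Measure Ω} {f : Ω → ℝ}
    (hf : AEStronglyMeasurable f μ) {s : ℝ} (hs : 0 < s) :
    MemLp f (ENNReal.ofReal s) μ ↔ ∫⁻ ω, ENNReal.ofReal (|f ω| ^ s) ∂μ ≠ ⊤ := by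
  rw [MemLp, and_iff_right hf, eLpNorm_lt_top_iff_lintegral_rpow_enorm_lt_top
    (ENNReal.ofReal_pos.mpr hs).ne' ENNReal.ofReal_ne_top, ENNReal.toReal_ofReal hs.le,
    lt_top_iff_ne_top]
  simp only [Real.enorm_eq_ofReal_abs, ENNReal.ofReal_rpow_of_nonneg (abs_nonneg _) hs.le]

variable (R : Ω → E) (p : ℝ≥0∞) (μ : Measure Ω)

def memLpInnerSubmodule : Submodule ℝ E where
  carrier := {y | MemLp (fun ω => inner ℝ y (R ω)) p μ}
  zero_mem' := by simpa only [Set.mem_ofPred_eq, inner_zero_left] using MemLp.zero'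
  add_mem' {y z} hy hz := by
    simpa only [Set.mem_ofPred_eq, inner_add_left, Pi.add_def] using hy.add hz
  smul_mem' c y hy := by
    simpa only [Set.mem_ofPred_eq, real_inner_smul_left] using hy.const_mul c

theorem isOpen_setOf_not_memLp_inner [FiniteDimensional ℝ E] :
    IsOpen {y : E | ¬ MemLp (fun ω => inner ℝ y (R ω)) p μ} :=
  (Submodule.closed_of_finiteDimensional (memLpInnerSubmodule R p μ)).isOpen_compl

end

theorem stmt11_general {Ω : Type*} [MeasurableSpace Ω] (μ : Measure Ω)
    (d : ℕ) (R : Ω → EuclideanSpace ℝ (Fin d)) (hR : Measurable R)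
    (s : ℝ) (hs : 0 < s)
    (x : EuclideanSpace ℝ (Fin d))
    (hinf : ∫⁻ ω, ENNReal.ofReal (|(inner ℝ x (R ω) : ℝ)| ^ s) ∂μ = ⊤) :
    ∃ ε > (0 : ℝ), ∀ y : EuclideanSpace ℝ (Fin d), ‖y‖ = 1 → ‖y - x‖ < ε →
      ∫⁻ ω, ENNReal.ofReal (|(inner ℝ y (R ω) : ℝ)| ^ s) ∂μ = ⊤ := by
  have hmemLp (y : EuclideanSpace ℝ (Fin d)) :
      MemLp (fun ω => inner ℝ y (R ω)) (ENNReal.ofReal s) μ ↔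
        ∫⁻ ω, ENNReal.ofReal (|(inner ℝ y (R ω) : ℝ)| ^ s) ∂μ ≠ ⊤ :=
    memLp_ofReal_iff_lintegral_abs_rpow_ne_top
      ((innerSL ℝ y).continuous.measurable.comp hR).aestronglyMeasurable hs
  obtain ⟨ε, hε, hball⟩ :=
    Metric.isOpen_iff.mp (isOpen_setOf_not_memLp_inner R (ENNReal.ofReal s) μ) x
      (by simpa [hmemLp] using hinf)
  refine ⟨ε, hε, fun y _ hyx => ?_⟩
  have hy : ¬ MemLp (fun ω => inner ℝ y (R ω)) (ENNReal.ofReal s) μ :=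
    hball (by rwa [Metric.mem_ball, dist_eq_norm])
  simpa [hmemLp] using hy

theorem stmt11 {Ω : Type*} [MeasurableSpace Ω] (μ : Measure Ω) [IsProbabilityMeasure μ]
    (d : ℕ) (R : Ω → EuclideanSpace ℝ (Fin d)) (hR : Measurable R)
    (s : ℝ) (hs : 0 < s)
    (x : EuclideanSpace ℝ (Fin d)) (hx : ‖x‖ = 1)
    (hinf : ∫⁻ ω, ENNReal.ofReal (|(inner ℝ x (R ω) : ℝ)| ^ s) ∂μ = ⊤) :
    ∃ ε > (0 : ℝ), ∀ y : EuclideanSpace ℝ (Fin d), ‖y‖ = 1 → ‖y - x‖ < ε →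
      ∫⁻ ω, ENNReal.ofReal (|(inner ℝ y (R ω) : ℝ)| ^ s) ∂μ = ⊤ :=
  stmt11_general μ d R hR s hs x hinf
end
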